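/- arXiv:2306.04088 — 3 statements merged into one kernel-verified Lean document; each statement's English description precedes it below -/
import Mathlib

section
/- For every prime p there exists a prime labeling of the ladder P_2 × P_{2p} in which the two vertices of the final column (the vertices (1,2p) and (2,2p)) receive the labels 1 and 4p. -/
/-- The ladder graph `L n = P_2 × P_n` on vertex set `Fin 2 × Fin n`:
`(i,j)` and `(i',j')` are adjacent iff they differ by one in exactly one coordinate. -/
def Ladder (n : ℕ) : SimpleGraph (Fin 2 × Fin n) where
  Adj u v := (u.1 = v.1 ∧ ((u.2 : ℕ) + 1 = (v.2 : ℕ) ∨ (v.2 : ℕ) + 1 = (u.2 : ℕ))) ∨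
    (u.2 = v.2 ∧ u.1 ≠ v.1)
  symm := by
    constructor
    rintro u v (⟨h1, h2⟩ | ⟨h1, h2⟩)
    · exact Or.inl ⟨h1.symm, h2.symm⟩
    · exact Or.inr ⟨h1.symm, h2.symm⟩
  loopless := by
    constructor
    rintro u (⟨h1, h2⟩ | ⟨h1, h2⟩)
    · omega
    · exact h2 rfl

/-- `L n` has a prime labeling: a bijection from its `2n` vertices to `{1, …, 2n}`
such that adjacent vertices receive coprime labels. -/
def HasPrimeLabeling (n : ℕ) : Prop :=
  ∃ f : (Fin 2 × Fin n) ≃ Fin (2 * n),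
    ∀ u v, (Ladder n).Adj u v → Nat.Coprime ((f u : ℕ) + 1) ((f v : ℕ) + 1)

/-!
For an odd prime `p` the two rows of the labeling of `L_{2p}` are

    3p,   3p-1, 2p-1, …, p+2, p+1,  3p+2, …, 4p-2, 4p-1, 4p
    3p+1, p,    p-1,  …, 2,   2p+1, 2p+2, …, 3p-2, 2p,   1.

Apart from five columns, every column holds `k` and `k + p` with `p ∤ k`, so it is coprime, and
inside each run the labels along a row are consecutive integers. The remaining adjacent
pairs `x, y` are coprime because `a * x = b * y + 1` for some small `a, b`, except for the pairs
containing `1` or `2` and for `3p - 2, 2p`, where `3 * 2p = 2 * (3p - 2) + 4` and `3p - 2` is odd.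
-/

open Function

theorem Nat.Coprime.of_mul_eq_mul_add {x y a b c : ℕ} (h : a * x = b * y + c)
    (hc : Nat.Coprime c y) : Nat.Coprime x y := by
  have hgc : Nat.gcd x y ∣ c :=
    (Nat.dvd_add_right (dvd_mul_of_dvd_right (Nat.gcd_dvd_right x y) b)).1
      (h ▸ dvd_mul_of_dvd_right (Nat.gcd_dvd_left x y) a)
  exact Nat.eq_one_of_dvd_one (hc ▸ Nat.dvd_gcd hgc (Nat.gcd_dvd_right x y))

theorem Nat.Coprime.of_eq_add_prime {p x y m : ℕ} (hp : p.Prime) (hy : y = x + p)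
    (h₁ : p * m < x) (h₂ : x < p * (m + 1)) : Nat.Coprime x y := by
  rw [hy, Nat.coprime_self_add_right, Nat.coprime_comm, hp.coprime_iff_not_dvd]
  exact Nat.not_dvd_of_lt_of_lt_mul_succ h₁ h₂

theorem exists_equiv_fin_of_injective {α : Type*} [Fintype α] {m : ℕ}
    (hcard : Fintype.card α = m) (ℓ : α → ℕ) (hinj : Injective ℓ)
    (hmem : ∀ a, ℓ a ∈ Set.Icc 1 m) : ∃ f : α ≃ Fin m, ∀ a, (f a : ℕ) + 1 = ℓ a := by
  let g : α → Fin m := fun a => ⟨ℓ a - 1, Nat.sub_one_lt_of_le (hmem a).1 (hmem a).2⟩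
  have hg : Injective g := fun a b hab => hinj <| by
    have h : ℓ a - 1 = ℓ b - 1 := congrArg Fin.val hab
    have := (hmem a).1; have := (hmem b).1; omega
  have hbij : Bijective g := (Fintype.bijective_iff_injective_and_card g).2 ⟨hg, by simp [hcard]⟩
  exact ⟨Equiv.ofBijective g hbij, fun a => Nat.sub_add_cancel (hmem a).1⟩

namespace Ladder

variable {n : ℕ} (top bot : ℕ → ℕ)

theorem coprime_of_adj (hcol : ∀ j < n, Nat.Coprime (top j) (bot j))
    (htop : ∀ j, j + 1 < n → Nat.Coprime (top j) (top (j + 1)))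
    (hbot : ∀ j, j + 1 < n → Nat.Coprime (bot j) (bot (j + 1)))
    {u v : Fin 2 × Fin n} (h : (Ladder n).Adj u v) :
    Nat.Coprime (![top, bot] u.1 u.2) (![top, bot] v.1 v.2) := by
  have hrow : ∀ i j, j + 1 < n → Nat.Coprime (![top, bot] i j) (![top, bot] i (j + 1)) := by
    intro i; fin_cases i; exacts [htop, hbot]
  obtain ⟨i, j⟩ := u
  obtain ⟨i', j'⟩ := v
  rcases h with ⟨rfl, hj | hj⟩ | ⟨hj, hi⟩
  · dsimp only; rw [← hj]; exact hrow i j (hj ▸ j'.isLt)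
  · dsimp only; rw [← hj]; exact (hrow i j' (hj ▸ j.isLt)).symm
  · obtain rfl : j = j' := hj
    fin_cases i <;> fin_cases i'
    · exact absurd rfl hi
    · exact hcol j j.isLt
    · exact (hcol j j.isLt).symm
    · exact absurd rfl hi

theorem exists_primeLabeling_of_rows
    (htop_inj : ∀ j < n, ∀ j' < n, top j = top j' → j = j')
    (hbot_inj : ∀ j < n, ∀ j' < n, bot j = bot j' → j = j')
    (hne : ∀ j < n, ∀ j' < n, top j ≠ bot j')
    (hmem : ∀ j < n, top j ∈ Set.Icc 1 (2 * n) ∧ bot j ∈ Set.Icc 1 (2 * n))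
    (hcol : ∀ j < n, Nat.Coprime (top j) (bot j))
    (htop : ∀ j, j + 1 < n → Nat.Coprime (top j) (top (j + 1)))
    (hbot : ∀ j, j + 1 < n → Nat.Coprime (bot j) (bot (j + 1))) :
    ∃ f : (Fin 2 × Fin n) ≃ Fin (2 * n),
      (∀ u v, (Ladder n).Adj u v → Nat.Coprime ((f u : ℕ) + 1) ((f v : ℕ) + 1)) ∧
      ∀ j : Fin n, (f (0, j) : ℕ) + 1 = top j ∧ (f (1, j) : ℕ) + 1 = bot j := by
  have hinj : Injective fun v : Fin 2 × Fin n => ![top, bot] v.1 v.2 := by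
    rintro ⟨i, j⟩ ⟨i', j'⟩ h
    fin_cases i <;> fin_cases i' <;>
      simp only [Fin.zero_eta, Fin.mk_one, Matrix.cons_val_zero, Matrix.cons_val_one,
        Matrix.cons_val_fin_one] at h
    · exact congrArg _ (Fin.ext (htop_inj j j.isLt j' j'.isLt h))
    · exact absurd h (hne j j.isLt j' j'.isLt)
    · exact absurd h.symm (hne j' j'.isLt j j.isLt)
    · exact congrArg _ (Fin.ext (hbot_inj j j.isLt j' j'.isLt h))
  have hmem' (v : Fin 2 × Fin n) : ![top, bot] v.1 v.2 ∈ Set.Icc 1 (2 * n) := by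
    obtain ⟨i, j⟩ := v
    fin_cases i
    exacts [(hmem j j.isLt).1, (hmem j j.isLt).2]
  obtain ⟨f, hf⟩ := exists_equiv_fin_of_injective (by simp) _ hinj hmem'
  exact ⟨f, fun u v h => hf u ▸ hf v ▸ coprime_of_adj top bot hcol htop hbot h,
    fun j => ⟨hf (0, j), hf (1, j)⟩⟩

end Ladder

def ladderTop (p j : ℕ) : ℕ :=
  if j ≤ 1 then 3 * p - j
  else if j < p then 2 * p + 1 - j
  else if j = p then p + 1
  else j + 2 * p + 1

def ladderBottom (p j : ℕ) : ℕ :=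
  if j = 0 then 3 * p + 1
  else if j < p then p + 1 - j
  else if j + 2 < 2 * p then j + p + 1
  else if j + 2 = 2 * p then 2 * p
  else 1

theorem ladderTop_cases (p j : ℕ) :
    (j ≤ 1 ∧ ladderTop p j = 3 * p - j) ∨
    (1 < j ∧ j < p ∧ ladderTop p j = 2 * p + 1 - j) ∨
    (1 < j ∧ j = p ∧ ladderTop p j = p + 1) ∨
    (1 < j ∧ p < j ∧ ladderTop p j = j + 2 * p + 1) := by
  unfold ladderTop; split_ifs <;> omega

theorem ladderBottom_cases (p j : ℕ) :
    (j = 0 ∧ ladderBottom p j = 3 * p + 1) ∨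
    (0 < j ∧ j < p ∧ ladderBottom p j = p + 1 - j) ∨
    (0 < j ∧ p ≤ j ∧ j + 2 < 2 * p ∧ ladderBottom p j = j + p + 1) ∨
    (0 < j ∧ p ≤ j ∧ j + 2 = 2 * p ∧ ladderBottom p j = 2 * p) ∨
    (0 < j ∧ p ≤ j ∧ 2 * p < j + 2 ∧ ladderBottom p j = 1) := by
  unfold ladderBottom; split_ifs <;> omega

section

variable {p : ℕ}

theorem ladderTop_inj (hp : 1 ≤ p) {j j' : ℕ} (h : ladderTop p j = ladderTop p j') : j = j' := by
  have := ladderTop_cases p j; have := ladderTop_cases p j'; omega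

theorem ladderBottom_inj {j j' : ℕ} (hj : j < 2 * p) (hj' : j' < 2 * p)
    (h : ladderBottom p j = ladderBottom p j') : j = j' := by
  have := ladderBottom_cases p j; have := ladderBottom_cases p j'; omega

theorem ladderTop_ne_ladderBottom (j j' : ℕ) : ladderTop p j ≠ ladderBottom p j' := by
  have := ladderTop_cases p j; have := ladderBottom_cases p j'; omega

theorem ladderTop_mem_Icc {j : ℕ} (hj : j < 2 * p) : ladderTop p j ∈ Set.Icc 1 (2 * (2 * p)) := by
  have := ladderTop_cases p j
  exact ⟨by omega, by omega⟩

theorem ladderBottom_mem_Icc {j : ℕ} (hj : j < 2 * p) :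
    ladderBottom p j ∈ Set.Icc 1 (2 * (2 * p)) := by
  have := ladderBottom_cases p j
  exact ⟨by omega, by omega⟩

theorem coprime_ladderTop_ladderBottom (hp : p.Prime) (h3 : 3 ≤ p) {j : ℕ} (hj : j < 2 * p) :
    Nat.Coprime (ladderTop p j) (ladderBottom p j) := by
  have := ladderTop_cases p j; have := ladderBottom_cases p j
  rcases (by omega : j = 0 ∨ j = 1 ∨ (1 < j ∧ j < p) ∨ j = p ∨ (p < j ∧ j + 2 < 2 * p) ∨
      j + 2 = 2 * p ∨ j + 1 = 2 * p) with rfl | rfl | hj | rfl | hj | hj | hj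
  · exact (Nat.Coprime.of_mul_eq_mul_add (a := 1) (b := 1) (c := 1) (by omega)
      (Nat.coprime_one_left _)).symm
  · exact (Nat.Coprime.of_mul_eq_mul_add (a := 3) (b := 1) (c := 1) (by omega)
      (Nat.coprime_one_left _)).symm
  · exact (Nat.Coprime.of_eq_add_prime hp (m := 0) (by omega) (by omega) (by omega)).symm
  · exact .of_mul_eq_mul_add (a := 2) (b := 1) (c := 1) (by omega) (Nat.coprime_one_left _)
  · exact (Nat.Coprime.of_eq_add_prime hp (m := 2) (by omega) (by omega) (by omega)).symm
  · exact (Nat.Coprime.of_mul_eq_mul_add (a := 2) (b := 1) (c := 1) (by omega)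
      (Nat.coprime_one_left _)).symm
  · rw [show ladderBottom p j = 1 by omega]; exact Nat.coprime_one_right _

theorem coprime_ladderTop_succ {j : ℕ} (hj : j + 1 < 2 * p) :
    Nat.Coprime (ladderTop p j) (ladderTop p (j + 1)) := by
  have := ladderTop_cases p j; have := ladderTop_cases p (j + 1)
  rcases (by omega : (j = 0 ∨ 1 < j ∧ j < p) ∨ j = 1 ∨ j = p ∨ p < j) with hj | rfl | rfl | hj
  · exact .of_mul_eq_mul_add (a := 1) (b := 1) (c := 1) (by omega) (Nat.coprime_one_left _)
  · exact .of_mul_eq_mul_add (a := 2) (b := 3) (c := 1) (by omega) (Nat.coprime_one_left _)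
  · exact .of_mul_eq_mul_add (a := 3) (b := 1) (c := 1) (by omega) (Nat.coprime_one_left _)
  · exact (Nat.Coprime.of_mul_eq_mul_add (a := 1) (b := 1) (c := 1) (by omega)
      (Nat.coprime_one_left _)).symm

theorem coprime_ladderBottom_succ (hodd : Odd p) (h3 : 3 ≤ p) {j : ℕ} (hj : j + 1 < 2 * p) :
    Nat.Coprime (ladderBottom p j) (ladderBottom p (j + 1)) := by
  have := ladderBottom_cases p j; have := ladderBottom_cases p (j + 1)
  have hpodd := Nat.odd_iff.1 hodd
  rcases (by omega : j = 0 ∨ (0 < j ∧ j + 1 < p) ∨ j + 1 = p ∨ (p ≤ j ∧ j + 3 < 2 * p) ∨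
      j + 3 = 2 * p ∨ j + 2 = 2 * p) with rfl | hj | hj | hj | hj | hj
  · exact .of_mul_eq_mul_add (a := 1) (b := 3) (c := 1) (by omega) (Nat.coprime_one_left _)
  · exact .of_mul_eq_mul_add (a := 1) (b := 1) (c := 1) (by omega) (Nat.coprime_one_left _)
  · rw [show ladderBottom p j = 2 by omega, show ladderBottom p (j + 1) = 2 * p + 1 by omega]
    exact Nat.coprime_two_left.2 (odd_two_mul_add_one p)
  · exact (Nat.Coprime.of_mul_eq_mul_add (a := 1) (b := 1) (c := 1) (by omega)
      (Nat.coprime_one_left _)).symm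
  · have hodd' : Odd (ladderBottom p j) := Nat.odd_iff.2 (by omega)
    exact (Nat.Coprime.of_mul_eq_mul_add (a := 3) (b := 2) (c := 2 ^ 2) (by omega)
      ((Nat.coprime_two_left.2 hodd').pow_left 2)).symm
  · rw [show ladderBottom p (j + 1) = 1 by omega]; exact Nat.coprime_one_right _

end

/-- For every prime `p` there is a prime labeling of `P_2 × P_{2p}` in which the
two vertices of the final column (column `2p`, i.e. index `2p - 1`) receive the
labels `1` and `4p`. -/
theorem exists_primeLabeling_ladder_two_mul_prime_with_final_column
    (p : ℕ) (hp : p.Prime) :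
    ∃ f : (Fin 2 × Fin (2 * p)) ≃ Fin (2 * (2 * p)),
      (∀ u v, (Ladder (2 * p)).Adj u v →
        Nat.Coprime ((f u : ℕ) + 1) ((f v : ℕ) + 1)) ∧
      ∀ j : Fin (2 * p), (j : ℕ) = 2 * p - 1 →
        ({(f (0, j) : ℕ) + 1, (f (1, j) : ℕ) + 1} : Set ℕ) = {1, 4 * p} := by
  rcases hp.eq_two_or_odd' with rfl | hodd
  · obtain ⟨f, hadj, hf⟩ := Ladder.exists_primeLabeling_of_rows (n := 2 * 2)
      (fun j => [3, 4, 7, 8].getD j 0) (fun j => [2, 5, 6, 1].getD j 0)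
      (by decide) (by decide) (by decide) (by decide) (by decide)
      (fun j hj => by have : j < 3 := (by omega); interval_cases j <;> decide)
      (fun j hj => by have : j < 3 := (by omega); interval_cases j <;> decide)
    refine ⟨f, hadj, fun j hj => ?_⟩
    simp [hf, hj, Set.pair_comm]
  · have h3 : 3 ≤ p := by have := hp.two_le; have := Nat.odd_iff.1 hodd; omega
    obtain ⟨f, hadj, hf⟩ := Ladder.exists_primeLabeling_of_rows (ladderTop p) (ladderBottom p)
      (fun _ _ _ _ => ladderTop_inj hp.one_le) (fun _ hj _ hj' => ladderBottom_inj hj hj')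
      (fun j _ j' _ => ladderTop_ne_ladderBottom j j')
      (fun _ hj => ⟨ladderTop_mem_Icc hj, ladderBottom_mem_Icc hj⟩)
      (fun _ => coprime_ladderTop_ladderBottom hp h3) (fun _ => coprime_ladderTop_succ)
      (fun _ => coprime_ladderBottom_succ hodd h3)
    refine ⟨f, hadj, fun j hj => ?_⟩
    have htop : ladderTop p j = 4 * p := by have := ladderTop_cases p j; omega
    have hbot : ladderBottom p j = 1 := by have := ladderBottom_cases p j; omega
    rw [(hf j).1, (hf j).2, htop, hbot, Set.pair_comm]
end

section
/- If a positive integer n has a strong canonical partition, then the ladder L_n = P_2 × P_n has a prime labeling. -/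
/-- A canonical partition of `n` is a sequence `p 1, …, p m` of odd primes summing
to `n` with `p j ≥ 2(p 1 + ⋯ + p (j-1)) + 3` for `1 < j ≤ m`. (The values of `p`
outside `{1, …, m}` are irrelevant.) -/
def IsCanonicalPartition (n m : ℕ) (p : ℕ → ℕ) : Prop :=
  (∀ j ∈ Finset.Icc 1 m, (p j).Prime ∧ Odd (p j)) ∧
  (∑ i ∈ Finset.Icc 1 m, p i) = n ∧
  (∀ j, 1 < j → j ≤ m → 2 * (∑ i ∈ Finset.Icc 1 (j - 1), p i) + 3 ≤ p j)

/-- `σ k = 2(p 1 + ⋯ + p (k-2)) + p (k-1)`. -/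
def sigmaCP (p : ℕ → ℕ) (k : ℕ) : ℕ := 2 * (∑ i ∈ Finset.Icc 1 (k - 2), p i) + p (k - 1)

/-- `τ k = 2(p 1 + ⋯ + p (k-1)) + p k + 1`. -/
def tauCP (p : ℕ → ℕ) (k : ℕ) : ℕ := 2 * (∑ i ∈ Finset.Icc 1 (k - 1), p i) + p k + 1

/-- A canonical partition `p 1, …, p m` is strong if `σ k` and `τ k` are coprime
for every `k` with `3 ≤ k ≤ m`. -/
def IsStrongCP (m : ℕ) (p : ℕ → ℕ) : Prop :=
  ∀ k, 3 ≤ k → k ≤ m → Nat.Coprime (sigmaCP p k) (tauCP p k)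

/-!
Cut the ladder into consecutive blocks of widths `p₁, …, p_m`. The block of width `P` starting
at column `N` gets the labels `2N + 1, …, 2N + 2P`, its column `N + t` carrying `2N + t + 1` and
`2N + t + 1 + P`. Horizontal neighbours then differ by `1` and vertical ones by `P`, and since
`P > 2N` only the column holding `P` and `2P` is bad. It is repaired by a transposition of labels:
`1 ↔ P` in the first block, and in later blocks `P ↔ P + 2` or `2P ↔ 2P + 2`, whichever of `P`,
`2P` is `2` mod `3`; there the new neighbours differ by `3` or are `(P, 2P + 2)`, `(P + 2, 2P)`.
Where two blocks meet, the even label `2N + 2P` faces `2N + 2P + 1`, and the odd label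
`2N + P = σ` (replaced by `1` at the end of the first block) faces `2(N + P) + P' + 1 = τ`:
this is where strongness is used.
-/

open Nat Set Equiv

theorem Nat.coprime_add_three_of_mod_three_ne_zero {x : ℕ} (hx : x % 3 ≠ 0) :
    Coprime x (x + 3) :=
  coprime_self_add_right.2 ((prime_three.coprime_iff_not_dvd.2 (by omega)).symm)

theorem Nat.coprime_add_prime {P x : ℕ} (hP : P.Prime) (hx0 : 0 < x) (hx : x < 2 * P)
    (hxP : x ≠ P) : Coprime x (x + P) :=
  coprime_self_add_right.2 (hP.coprime_iff_not_dvd.2 fun hdvd =>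
    hxP (eq_of_dvd_of_lt_two_mul hx0.ne' hdvd hx)).symm

theorem Odd.coprime_two_mul_add_two {P : ℕ} (hodd : Odd P) : Coprime P (2 * P + 2) := by
  rw [show 2 * P + 2 = 2 * (P + 1) by ring]
  exact Coprime.mul_right hodd.coprime_two_right (coprime_self_add_right.2 (coprime_one_right P))

theorem Odd.coprime_add_two_two_mul {P : ℕ} (hodd : Odd P) : Coprime (P + 2) (2 * P) :=
  Coprime.mul_right (by simpa [parity_simps] using hodd)
    (coprime_self_add_left.2 hodd.coprime_two_right.symm)

/-- Column `j` of `L n` gets the odd label `O j` in row `j % 2` and the even label `E j` in the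
other row. Since the rows alternate, horizontal neighbours pair `O j` with `E (j + 1)` and `E j`
with `O (j + 1)`. -/
structure IsColumnLabeling (n : ℕ) (O E : ℕ → ℕ) : Prop where
  odd : ∀ j < n, Odd (O j)
  even : ∀ j < n, Even (E j)
  pos : ∀ j < n, 0 < E j
  le_two_mul : ∀ j < n, O j ≤ 2 * n ∧ E j ≤ 2 * n
  injOn_odd : InjOn O (Iio n)
  injOn_even : InjOn E (Iio n)
  coprime : ∀ j < n, Coprime (O j) (E j)
  coprime_succ : ∀ j, j + 1 < n → Coprime (O j) (E (j + 1)) ∧ Coprime (E j) (O (j + 1))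

theorem hasPrimeLabeling_of_injective {n : ℕ} (f : Fin 2 × Fin n → ℕ)
    (hf : Function.Injective f) (hmem : ∀ v, f v ∈ Icc 1 (2 * n))
    (hadj : ∀ u v, (Ladder n).Adj u v → Coprime (f u) (f v)) : HasPrimeLabeling n := by
  have hmem' : ∀ v, 1 ≤ f v ∧ f v ≤ 2 * n := hmem
  let F : Fin 2 × Fin n → Fin (2 * n) := fun v => ⟨f v - 1, by grind⟩
  have hF : Function.Bijective F := by
    refine (Fintype.bijective_iff_injective_and_card F).2 ⟨fun u v huv => hf ?_, by simp⟩
    have := hmem' u; have := hmem' v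
    simp only [F, Fin.ext_iff] at huv
    omega
  refine ⟨Equiv.ofBijective F hF, fun u v huv => ?_⟩
  have hu := hmem' u; have hv := hmem' v
  simpa [F, Nat.sub_add_cancel hu.1, Nat.sub_add_cancel hv.1] using hadj u v huv

namespace IsColumnLabeling

variable {n : ℕ} {O E : ℕ → ℕ}

theorem coprime_of_adj (h : IsColumnLabeling n O E) {r r' j j' : ℕ} (hr : r < 2) (hr' : r' < 2)
    (hj : j < n) (hj' : j' < n) (hadj : r = r' ∧ (j + 1 = j' ∨ j' + 1 = j) ∨ j = j' ∧ r ≠ r') :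
    Coprime (if r = j % 2 then O j else E j) (if r' = j' % 2 then O j' else E j') := by
  rcases hadj with ⟨rfl, rfl | rfl⟩ | ⟨rfl, hrr'⟩
  · have hc := h.coprime_succ j hj'
    split_ifs <;> first | exact hc.1 | exact hc.2 | omega
  · have hc := h.coprime_succ j' hj
    split_ifs <;> first | exact hc.1.symm | exact hc.2.symm | omega
  · have hc := h.coprime j hj
    split_ifs <;> first | exact hc | exact hc.symm | omega

theorem hasPrimeLabeling (h : IsColumnLabeling n O E) : HasPrimeLabeling n := by
  refine hasPrimeLabeling_of_injective
    (fun v => if (v.1 : ℕ) = v.2 % 2 then O v.2 else E v.2) ?_ ?_ ?_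
  · rintro ⟨r, j, hj⟩ ⟨r', j', hj'⟩ hrr'
    have := r.isLt; have := r'.isLt
    have hO := Nat.odd_iff.1 (h.odd j hj); have hE := Nat.even_iff.1 (h.even j hj)
    have hO' := Nat.odd_iff.1 (h.odd j' hj'); have hE' := Nat.even_iff.1 (h.even j' hj')
    dsimp only at hrr'
    split_ifs at hrr' with h1 h2 h2
    · obtain rfl := h.injOn_odd hj hj' hrr'
      exact Prod.ext (Fin.ext (show (r : ℕ) = r' by omega)) rfl
    · omega
    · omega
    · obtain rfl := h.injOn_even hj hj' hrr'
      exact Prod.ext (Fin.ext (show (r : ℕ) = r' by omega)) rfl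
  · rintro ⟨r, j, hj⟩
    have hO := (h.odd j hj).pos; have hE := h.pos j hj; have := h.le_two_mul j hj
    simp only [mem_Icc]
    split_ifs <;> omega
  · rintro ⟨r, j, hj⟩ ⟨r', j', hj'⟩ hadj
    refine h.coprime_of_adj r.isLt r'.isLt hj hj' ?_
    simpa [Ladder, Fin.ext_iff] using hadj

end IsColumnLabeling

/-- Column `j` of a block of width `P` that starts at column `N` carries the labels `N + j + 1`
and `N + j + 1 + P` permuted by `ν`; for odd `P` and parity-preserving `ν`, `blockOdd` is the odd
one and `blockEven` the even one. -/
def blockOdd (ν : Perm ℕ) (N P j : ℕ) : ℕ :=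
  ν (if Even (N + j) then N + j + 1 else N + j + 1 + P)

def blockEven (ν : Perm ℕ) (N P j : ℕ) : ℕ :=
  ν (if Even (N + j) then N + j + 1 + P else N + j + 1)

theorem injOn_blockOdd (ν : Perm ℕ) (N P : ℕ) : InjOn (blockOdd ν N P) (Ico N (N + P)) := by
  intro j hj j' hj' hjj'
  simp only [mem_Ico] at hj hj'
  have := ν.injective hjj'
  split_ifs at this <;> omega

theorem injOn_blockEven (ν : Perm ℕ) (N P : ℕ) : InjOn (blockEven ν N P) (Ico N (N + P)) := by
  intro j hj j' hj' hjj'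
  simp only [mem_Ico] at hj hj'
  have := ν.injective hjj'
  split_ifs at this <;> omega

/-- In a block with labels `2N+1, …, 2N+2P`, horizontal neighbours carry labels differing by `1`
and vertical ones labels differing by `P`, before relabelling by `ν`. -/
structure IsBlockRelabeling (N P : ℕ) (ν : Perm ℕ) : Prop where
  mod_two : ∀ x, ν x % 2 = x % 2
  mapsTo : MapsTo ν (Icc (2 * N + 1) (2 * N + 2 * P)) (Icc (2 * N + 1) (2 * N + 2 * P))
  coprime_succ : ∀ x ∈ Ico (2 * N + 1) (2 * N + 2 * P), Coprime (ν x) (ν (x + 1))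
  coprime_add : ∀ x ∈ Icc (2 * N + 1) (2 * N + P), Coprime (ν x) (ν (x + P))

namespace IsBlockRelabeling

variable {N P j : ℕ} {ν : Perm ℕ}

theorem odd_blockOdd (hν : IsBlockRelabeling N P ν) (hP : Odd P) : Odd (blockOdd ν N P j) := by
  rw [Nat.odd_iff, blockOdd, hν.mod_two]
  rw [Nat.odd_iff] at hP
  split_ifs with h <;> [rw [Nat.even_iff] at h; rw [Nat.not_even_iff] at h] <;> omega

theorem even_blockEven (hν : IsBlockRelabeling N P ν) (hP : Odd P) :
    Even (blockEven ν N P j) := by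
  rw [Nat.even_iff, blockEven, hν.mod_two]
  rw [Nat.odd_iff] at hP
  split_ifs with h <;> [rw [Nat.even_iff] at h; rw [Nat.not_even_iff] at h] <;> omega

theorem blockOdd_mem (hν : IsBlockRelabeling N P ν) (hj : j ∈ Ico N (N + P)) :
    blockOdd ν N P j ∈ Icc (2 * N + 1) (2 * N + 2 * P) := by
  rw [mem_Ico] at hj
  refine hν.mapsTo ?_
  rw [mem_Icc]
  split_ifs <;> omega

theorem blockEven_mem (hν : IsBlockRelabeling N P ν) (hj : j ∈ Ico N (N + P)) :
    blockEven ν N P j ∈ Icc (2 * N + 1) (2 * N + 2 * P) := by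
  rw [mem_Ico] at hj
  refine hν.mapsTo ?_
  rw [mem_Icc]
  split_ifs <;> omega

theorem coprime_blockOdd_blockEven (hν : IsBlockRelabeling N P ν) (hj : j ∈ Ico N (N + P)) :
    Coprime (blockOdd ν N P j) (blockEven ν N P j) := by
  rw [mem_Ico] at hj
  have hc := hν.coprime_add (N + j + 1) (by rw [mem_Icc]; omega)
  unfold blockOdd blockEven
  split_ifs
  exacts [hc, hc.symm]

theorem coprime_blockOdd_blockEven_succ (hν : IsBlockRelabeling N P ν)
    (hNj : N ≤ j) (hj : j + 1 < N + P) :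
    Coprime (blockOdd ν N P j) (blockEven ν N P (j + 1)) ∧
      Coprime (blockEven ν N P j) (blockOdd ν N P (j + 1)) := by
  have hc := hν.coprime_succ (N + j + 1) (by rw [mem_Ico]; omega)
  have hc' := hν.coprime_succ (N + j + 1 + P) (by rw [mem_Ico]; omega)
  have hpar : Even (N + (j + 1)) ↔ ¬Even (N + j) := by rw [← add_assoc, Nat.even_add_one]
  have e₁ : N + (j + 1) + 1 = N + j + 1 + 1 := by ring
  have e₂ : N + j + 1 + 1 + P = N + j + 1 + P + 1 := by ring
  unfold blockOdd blockEven
  by_cases h : Even (N + j)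
  · simpa only [h, hpar, if_true, if_false, not_true, e₁, e₂] using And.intro hc hc'
  · simpa only [h, hpar, if_true, if_false, not_false_eq_true, e₁, e₂] using And.intro hc' hc

end IsBlockRelabeling

theorem injOn_ite_lt {N M : ℕ} {f g : ℕ → ℕ} (hf : InjOn f (Iio N)) (hg : InjOn g (Ico N M))
    (hfg : ∀ j < N, ∀ j' ∈ Ico N M, f j < g j') :
    InjOn (fun j => if j < N then f j else g j) (Iio M) := by
  intro j hj j' hj' hjj'
  simp only [mem_Iio] at hj hj'
  by_cases h : j < N <;> by_cases h' : j' < N <;> simp only [h, h', if_true, if_false] at hjj'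
  · exact hf h h' hjj'
  · exact absurd hjj' (hfg j h j' ⟨not_lt.1 h', hj'⟩).ne
  · exact absurd hjj' (hfg j' h' j ⟨not_lt.1 h, hj⟩).ne'
  · exact hg ⟨not_lt.1 h, hj⟩ ⟨not_lt.1 h', hj'⟩ hjj'

theorem IsColumnLabeling.append {N P : ℕ} {O E : ℕ → ℕ} {ν : Perm ℕ}
    (h : IsColumnLabeling N O E) (hP : Odd P) (hν : IsBlockRelabeling N P ν)
    (hjunc : ∀ j, j + 1 = N →
      Coprime (O j) (blockEven ν N P N) ∧ Coprime (E j) (blockOdd ν N P N)) :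
    IsColumnLabeling (N + P) (fun j => if j < N then O j else blockOdd ν N P j)
      (fun j => if j < N then E j else blockEven ν N P j) := by
  have hblock : ∀ {j}, ¬j < N → j < N + P → j ∈ Ico N (N + P) := fun h h' => ⟨not_lt.1 h, h'⟩
  refine ⟨fun j hj => ?_, fun j hj => ?_, fun j hj => ?_, fun j hj => ?_, ?_, ?_,
    fun j hj => ?_, fun j hj => ?_⟩
  · split_ifs with hjN
    exacts [h.odd j hjN, hν.odd_blockOdd hP]
  · split_ifs with hjN
    exacts [h.even j hjN, hν.even_blockEven hP]
  · split_ifs with hjN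
    · exact h.pos j hjN
    · exact lt_of_lt_of_le (Nat.succ_pos _) (hν.blockEven_mem (hblock hjN hj)).1
  · split_ifs with hjN
    · have := h.le_two_mul j hjN; omega
    · have := hν.blockOdd_mem (hblock hjN hj); have := hν.blockEven_mem (hblock hjN hj)
      simp only [mem_Icc] at *; omega
  · refine injOn_ite_lt h.injOn_odd (injOn_blockOdd ν N P) fun j hj j' hj' => ?_
    have := (h.le_two_mul j hj).1; have := (hν.blockOdd_mem hj').1; omega
  · refine injOn_ite_lt h.injOn_even (injOn_blockEven ν N P) fun j hj j' hj' => ?_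
    have := (h.le_two_mul j hj).2; have := (hν.blockEven_mem hj').1; omega
  · split_ifs with hjN
    exacts [h.coprime j hjN, hν.coprime_blockOdd_blockEven (hblock hjN hj)]
  · rcases lt_trichotomy (j + 1) N with hjN | hjN | hjN
    · simpa only [hjN, if_true, show j < N by omega] using h.coprime_succ j hjN
    · simpa only [show j < N by omega, hjN, lt_irrefl, if_true, if_false] using hjunc j hjN
    · simpa only [show ¬j < N by omega, show ¬j + 1 < N by omega, if_false]
        using hν.coprime_blockOdd_blockEven_succ (by omega) hj

theorem swap_apply_mod_two {u v : ℕ} (h : u % 2 = v % 2) (x : ℕ) : swap u v x % 2 = x % 2 := by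
  rw [swap_apply_def]
  split_ifs <;> omega

theorem isBlockRelabeling_swap_one {P : ℕ} (hP : P.Prime) (hodd : Odd P) :
    IsBlockRelabeling 0 P (swap 1 P) := by
  have hP3 : 3 ≤ P := by have := hP.two_le; rcases hodd with ⟨k, rfl⟩; omega
  refine ⟨swap_apply_mod_two (by rw [Nat.odd_iff] at hodd; omega),
    (swap_bijOn_self (by simp only [mem_Icc]; omega)).mapsTo, fun x hx => ?_, fun x hx => ?_⟩
  · simp only [mem_Ico] at hx
    obtain rfl | rfl | rfl | ⟨h₁, h₂, h₃, h₄⟩ :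
        x = 1 ∨ x + 1 = P ∨ x = P ∨ (x ≠ 1 ∧ x + 1 ≠ 1 ∧ x + 1 ≠ P ∧ x ≠ P) := by omega
    · rw [swap_apply_left, swap_apply_of_ne_of_ne (by omega) (by omega)]
      exact hodd.coprime_two_right
    · rw [swap_apply_right, swap_apply_of_ne_of_ne (by omega) (by omega)]
      exact coprime_one_right _
    · rw [swap_apply_right, swap_apply_of_ne_of_ne (by omega) (by omega)]
      exact coprime_one_left _
    · rw [swap_apply_of_ne_of_ne h₁ h₄, swap_apply_of_ne_of_ne h₂ h₃]
      simp
  · simp only [mem_Icc] at hx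
    obtain rfl | rfl | ⟨h₁, h₂⟩ : x = 1 ∨ x = P ∨ (x ≠ 1 ∧ x ≠ P) := by omega
    · rw [swap_apply_left, swap_apply_of_ne_of_ne (by omega) (by omega)]
      simp
    · rw [swap_apply_right]
      exact coprime_one_left _
    · rw [swap_apply_of_ne_of_ne h₁ h₂, swap_apply_of_ne_of_ne (by omega) (by omega)]
      exact coprime_add_prime hP (by omega) (by omega) h₂

/-- The transposition creates only the new neighbouring pairs `(u - 1, u + 2)` and `(u, u + 3)`. -/
theorem coprime_swap_add_two_apply_succ {u : ℕ} (hu : u % 3 = 2) (x : ℕ) :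
    Coprime (swap u (u + 2) x) (swap u (u + 2) (x + 1)) := by
  obtain rfl | rfl | rfl | rfl | ⟨h₁, h₂, h₃, h₄⟩ :
      u = x + 1 ∨ x = u ∨ x = u + 1 ∨ x = u + 2 ∨
        (x ≠ u ∧ x ≠ u + 2 ∧ x + 1 ≠ u ∧ x + 1 ≠ u + 2) := by omega
  · rw [swap_apply_of_ne_of_ne (by omega) (by omega), swap_apply_left]
    exact coprime_add_three_of_mod_three_ne_zero (by omega)
  · rw [swap_apply_left, swap_apply_of_ne_of_ne (by omega) (by omega)]
    exact (coprime_self_add_right.2 (coprime_one_right _)).symm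
  · rw [swap_apply_of_ne_of_ne (by omega) (by omega), swap_apply_right]
    simp
  · rw [swap_apply_right, swap_apply_of_ne_of_ne (by omega) (by omega)]
    exact coprime_add_three_of_mod_three_ne_zero (by omega)
  · rw [swap_apply_of_ne_of_ne h₁ h₂, swap_apply_of_ne_of_ne h₃ h₄]
    simp

theorem coprime_swap_add_two_apply_add {P u x : ℕ} (hP : P.Prime) (hodd : Odd P)
    (hu : u = P ∨ u = 2 * P) (hx : 3 ≤ x) (hx' : x < 2 * P) :
    Coprime (swap u (u + 2) x) (swap u (u + 2) (x + P)) := by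
  have hP3 : 3 ≤ P := by have := hP.two_le; rcases hodd with ⟨k, rfl⟩; omega
  have e : P + 2 + P = 2 * P + 2 := by ring
  obtain rfl | rfl | ⟨h₁, h₂⟩ : x = P ∨ x = P + 2 ∨ (x ≠ P ∧ x ≠ P + 2) := by omega
  · rcases hu with rfl | rfl
    · rw [swap_apply_left, swap_apply_of_ne_of_ne (by omega) (by omega), ← two_mul]
      exact hodd.coprime_add_two_two_mul
    · rw [swap_apply_of_ne_of_ne (by omega) (by omega), ← two_mul, swap_apply_left]
      exact hodd.coprime_two_mul_add_two
  · rcases hu with rfl | rfl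
    · rw [swap_apply_right, swap_apply_of_ne_of_ne (by omega) (by omega), e]
      exact hodd.coprime_two_mul_add_two
    · rw [swap_apply_of_ne_of_ne (by omega) (by omega), e, swap_apply_right]
      exact hodd.coprime_add_two_two_mul
  · rw [swap_apply_of_ne_of_ne (by omega) (by omega), swap_apply_of_ne_of_ne (by omega) (by omega)]
    exact coprime_add_prime hP (by omega) hx' h₁

theorem isBlockRelabeling_swap_add_two {N P u : ℕ} (hP : P.Prime) (hN : 1 ≤ N)
    (hPN : 2 * N + 3 ≤ P) (hu : u = P ∨ u = 2 * P) (hu3 : u % 3 = 2) :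
    IsBlockRelabeling N P (swap u (u + 2)) where
  mod_two := swap_apply_mod_two (by omega)
  mapsTo := (swap_bijOn_self (by simp only [mem_Icc]; omega)).mapsTo
  coprime_succ x _ := coprime_swap_add_two_apply_succ hu3 x
  coprime_add x hx := by
    rw [mem_Icc] at hx
    exact coprime_swap_add_two_apply_add hP (hP.odd_of_ne_two (by omega)) hu (by omega) (by omega)

section BlockEnds

variable {ν : Perm ℕ} {N P j : ℕ}

theorem blockOdd_self : blockOdd ν N P N = ν (2 * N + 1) := by
  simp [blockOdd, two_mul]

theorem blockEven_self : blockEven ν N P N = ν (2 * N + P + 1) := by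
  simp [blockEven, two_mul, add_right_comm]

theorem blockOdd_of_add_one_eq (hP : Odd P) (hj : j + 1 = N + P) :
    blockOdd ν N P j = ν (2 * N + P) := by
  have : Even (N + j) := by
    rcases hP with ⟨k, rfl⟩; exact ⟨N + k, by omega⟩
  rw [blockOdd, if_pos this]
  congr 1; omega

theorem blockEven_of_add_one_eq (hP : Odd P) (hj : j + 1 = N + P) :
    blockEven ν N P j = ν (2 * (N + P)) := by
  have : Even (N + j) := by
    rcases hP with ⟨k, rfl⟩; exact ⟨N + k, by omega⟩
  rw [blockEven, if_pos this]
  congr 1; omega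

end BlockEnds

theorem exists_isColumnLabeling_of_prime {P : ℕ} (hP : P.Prime) (hodd : Odd P) :
    ∃ O E, IsColumnLabeling P O E ∧ E (P - 1) = 2 * P ∧ O (P - 1) = 1 := by
  have hempty : IsColumnLabeling 0 id id := by constructor <;> simp
  have hP1 : P - 1 + 1 = 0 + P := by have := hP.one_lt; omega
  refine ⟨_, _, zero_add P ▸ hempty.append hodd (isBlockRelabeling_swap_one hP hodd) (by simp),
    ?_, ?_⟩
  · simp [blockEven_of_add_one_eq hodd hP1,
      swap_apply_of_ne_of_ne (by omega : 2 * P ≠ 1) (by omega : 2 * P ≠ P)]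
  · simp [blockOdd_of_add_one_eq hodd hP1]

theorem IsColumnLabeling.exists_extend {N P : ℕ} {O E : ℕ → ℕ} (h : IsColumnLabeling N O E)
    (hN : 2 ≤ N) (hP : P.Prime) (hPN : 2 * N + 3 ≤ P) (hE : E (N - 1) = 2 * N)
    (hO : Coprime (O (N - 1)) (2 * N + P + 1)) :
    ∃ O' E', IsColumnLabeling (N + P) O' E' ∧
      E' (N + P - 1) = 2 * (N + P) ∧ O' (N + P - 1) = 2 * N + P := by
  have hodd : Odd P := hP.odd_of_ne_two (by omega)
  obtain ⟨u, hu, hu3⟩ : ∃ u, (u = P ∨ u = 2 * P) ∧ u % 3 = 2 := by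
    have : ¬3 ∣ P := fun h3 => by
      have := (Nat.prime_dvd_prime_iff_eq prime_three hP).1 h3; omega
    by_cases h2 : P % 3 = 2
    · exact ⟨P, .inl rfl, h2⟩
    · exact ⟨2 * P, .inr rfl, by omega⟩
  have hν := isBlockRelabeling_swap_add_two hP (by omega) hPN hu hu3
  refine ⟨_, _, h.append hodd hν fun j hj => ?_, ?_, ?_⟩
  · obtain rfl : j = N - 1 := by omega
    rw [blockEven_self, blockOdd_self, swap_apply_of_ne_of_ne (by omega) (by omega),
      swap_apply_of_ne_of_ne (by omega) (by omega), hE]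
    exact ⟨hO, by simp⟩
  · rw [if_neg (by omega), blockEven_of_add_one_eq hodd (by omega),
      swap_apply_of_ne_of_ne (by omega) (by omega)]
  · rw [if_neg (by omega), blockOdd_of_add_one_eq hodd (by omega),
      swap_apply_of_ne_of_ne (by omega) (by omega)]

def partialSum (p : ℕ → ℕ) (k : ℕ) : ℕ := ∑ i ∈ Finset.Icc 1 k, p i

theorem partialSum_succ (p : ℕ → ℕ) (k : ℕ) :
    partialSum p (k + 1) = partialSum p k + p (k + 1) :=
  Finset.sum_Icc_succ_top (by omega) p

theorem sigmaCP_add_two (p : ℕ → ℕ) (k : ℕ) :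
    sigmaCP p (k + 2) = 2 * partialSum p k + p (k + 1) := rfl

theorem tauCP_add_one (p : ℕ → ℕ) (k : ℕ) :
    tauCP p (k + 1) = 2 * partialSum p k + p (k + 1) + 1 := rfl

theorem exists_isColumnLabeling_partialSum {n m : ℕ} {p : ℕ → ℕ}
    (hcp : IsCanonicalPartition n m p) (hstrong : IsStrongCP m p) {k : ℕ} (hk : 1 ≤ k)
    (hkm : k ≤ m) :
    ∃ O E, IsColumnLabeling (partialSum p k) O E ∧
      E (partialSum p k - 1) = 2 * partialSum p k ∧
      (k < m → Coprime (O (partialSum p k - 1)) (tauCP p (k + 1))) := by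
  obtain ⟨hprime, -, hgap⟩ := hcp
  have hpj : ∀ j, 1 ≤ j → j ≤ m → (p j).Prime ∧ Odd (p j) := fun j h₁ h₂ =>
    hprime j (Finset.mem_Icc.2 ⟨h₁, h₂⟩)
  induction k, hk using Nat.le_induction with
  | base =>
    obtain ⟨O, E, h, hE, hO⟩ := exists_isColumnLabeling_of_prime (hpj 1 le_rfl hkm).1
      (hpj 1 le_rfl hkm).2
    rw [show partialSum p 1 = p 1 by simp [partialSum]]
    exact ⟨O, E, h, hE, fun _ => by rw [hO]; exact coprime_one_left _⟩
  | succ k hk ih =>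
    obtain ⟨O, E, h, hE, hO⟩ := ih (by omega)
    have hp1 : 3 ≤ p 1 := by
      obtain ⟨hpr, c, hc⟩ := hpj 1 le_rfl (by omega); have := hpr.two_le; omega
    have hN : p 1 ≤ partialSum p k :=
      Finset.single_le_sum (fun _ _ => Nat.zero_le _) (Finset.mem_Icc.2 ⟨le_rfl, hk⟩)
    have hPN : 2 * partialSum p k + 3 ≤ p (k + 1) := by
      simpa [partialSum] using hgap (k + 1) (by omega) hkm
    obtain ⟨O', E', h', hE', hO'⟩ :=
      h.exists_extend (by omega) (hpj (k + 1) (by omega) hkm).1 hPN hE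
        (tauCP_add_one p k ▸ hO (by omega))
    rw [← partialSum_succ] at h' hE' hO'
    refine ⟨O', E', h', hE', fun hk1 => ?_⟩
    rw [hO', ← sigmaCP_add_two]
    exact hstrong (k + 2) (by omega) hk1

/-- If a positive integer `n` has a strong canonical partition, then the ladder
`L n = P_2 × P_n` has a prime labeling. -/
theorem ladder_prime_of_strong_canonical_partition
    (n m : ℕ) (p : ℕ → ℕ) (hn : 0 < n)
    (hcp : IsCanonicalPartition n m p) (hstrong : IsStrongCP m p) :
    HasPrimeLabeling n := by
  have hm : 1 ≤ m := Nat.one_le_iff_ne_zero.2 fun hm => by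
    have := hcp.2.1
    simp [hm] at this
    omega
  obtain ⟨O, E, h, -⟩ := exists_isColumnLabeling_partialSum hcp hstrong hm le_rfl
  rw [partialSum, hcp.2.1] at h
  exact h.hasPrimeLabeling
end

section
/- Let p ≥ 7 be a prime and define a labeling f of the ladder P_2 × P_{2p} by f(i,j) = (i-1)p + j when 1 ≤ j ≤ p, and f(i,j) = (3-i)p + j when p+1 ≤ j ≤ 2p (for i ∈ {1,2}). Then f is a bijection onto {1, 2, ..., 4p}, and the only pairs of adjacent vertices whose labels are not coprime are the pair labeled {p, 2p} (the two vertices of column p) and the pair labeled {3p, 4p} (the two vertices of column 2p). -/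
/-!
In paper coordinates (rows 1, 2; columns 1, …, 2p) the second row carries `p + j` in every
column `j`, while the first row carries `j` for `j ≤ p` and `2p + j` for `j > p`; the four
half-rows fill `[1, p]`, `[p+1, 2p]`, `[2p+1, 3p]`, `[3p+1, 4p]`, which gives the bijection.
Horizontal neighbours carry consecutive labels, except `p` and `3p + 1` at the junction of the
first row. Vertical neighbours carry `a` and `a + p`, and `gcd (a, a + p) = gcd (a, p)` is `1`
unless `p ∣ a`; in column `j` the smaller label is `j` or `p + j`, so this happens only for
`j = p` and `j = 2p`.
-/

@[elab_as_elim]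
lemma Ladder.adj_induction {n : ℕ} {P : Fin 2 × Fin n → Fin 2 × Fin n → Prop}
    (symm : ∀ u v, P u v → P v u)
    (horizontal : ∀ i (j j' : Fin n), (j : ℕ) + 1 = j' → P (i, j) (i, j'))
    (vertical : ∀ j, P (0, j) (1, j)) {u v : Fin 2 × Fin n} (huv : (Ladder n).Adj u v) :
    P u v := by
  obtain ⟨i, j⟩ := u
  obtain ⟨i', j'⟩ := v
  rcases huv with ⟨hi, h | h⟩ | ⟨hj, hi⟩
  · exact (show i = i' from hi) ▸ horizontal i j j' h
  · exact symm _ _ ((show i = i' from hi) ▸ horizontal i' j' j h)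
  · obtain rfl : j = j' := hj
    fin_cases i <;> fin_cases i'
    all_goals first | exact absurd rfl hi | exact vertical j | exact symm _ _ (vertical j)

lemma eq_or_eq_two_mul_of_dvd {p m : ℕ} (h : p ∣ m) (hm : 0 < m) (hmp : m ≤ 2 * p) :
    m = p ∨ m = 2 * p := by
  obtain ⟨c, rfl⟩ := h
  have hc : c ≤ 2 := by
    rw [mul_comm 2] at hmp
    exact Nat.le_of_mul_le_mul_left hmp (Nat.pos_of_mul_pos_right hm)
  interval_cases c <;> simp_all [mul_comm]

lemma not_coprime_of_pair_eq {p a b : ℕ} (hp : 1 < p)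
    (h : ({a, b} : Set ℕ) = {p, 2 * p} ∨ ({a, b} : Set ℕ) = {3 * p, 4 * p}) :
    ¬ Nat.Coprime a b := by
  have hdvd : ∀ x ∈ ({a, b} : Set ℕ), p ∣ x := by
    rcases h with h | h <;> simp [h]
  exact Nat.not_coprime_of_dvd_of_dvd hp (hdvd a (by simp)) (hdvd b (by simp))

def ladderLabel (p i j : ℕ) : ℕ :=
  if j + 1 ≤ p then i * p + (j + 1) else (2 - i) * p + (j + 1)

section ladderLabel

variable {p j : ℕ}

lemma ladderLabel_zero_of_lt (hj : j < p) : ladderLabel p 0 j = j + 1 := by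
  simp [ladderLabel, Nat.succ_le_of_lt hj]

lemma ladderLabel_zero_of_le (hj : p ≤ j) : ladderLabel p 0 j = 2 * p + (j + 1) := by
  simp [ladderLabel, show ¬ j + 1 ≤ p by omega]

lemma ladderLabel_one : ladderLabel p 1 j = p + (j + 1) := by
  unfold ladderLabel; split <;> omega

lemma ladderLabel_mem_Icc {i : ℕ} (hi : i < 2) (hj : j < 2 * p) :
    ladderLabel p i j ∈ Set.Icc 1 (4 * p) := by
  interval_cases i
  · rcases lt_or_ge j p with h | h
    · simp only [ladderLabel_zero_of_lt h, Set.mem_Icc]; omega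
    · simp only [ladderLabel_zero_of_le h, Set.mem_Icc]; omega
  · simp only [ladderLabel_one, Set.mem_Icc]; omega

lemma ladderLabel_inj {i i' j' : ℕ} (hi : i < 2) (hi' : i' < 2) (hj : j < 2 * p)
    (hj' : j' < 2 * p) (h : ladderLabel p i j = ladderLabel p i' j') : i = i' ∧ j = j' := by
  interval_cases i <;> interval_cases i' <;>
    rcases lt_or_ge j p with hjp | hjp <;> rcases lt_or_ge j' p with hjp' | hjp' <;>
    simp only [ladderLabel_zero_of_lt, ladderLabel_zero_of_le, ladderLabel_one, *] at h <;> omega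

lemma ladderLabel_bijOn (p : ℕ) :
    Set.BijOn (fun u : Fin 2 × Fin (2 * p) ↦ ladderLabel p u.1 u.2) Set.univ
      (Set.Icc 1 (4 * p)) := by
  set L := fun u : Fin 2 × Fin (2 * p) ↦ ladderLabel p u.1 u.2
  have hmaps : Set.MapsTo L Set.univ (Set.Icc 1 (4 * p)) :=
    fun u _ ↦ ladderLabel_mem_Icc u.1.isLt u.2.isLt
  have hinj : Set.InjOn L Set.univ := by
    rintro ⟨i, j⟩ - ⟨i', j'⟩ - h
    obtain ⟨hii', hjj'⟩ := ladderLabel_inj i.isLt i'.isLt j.isLt j'.isLt h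
    simp [Prod.ext_iff, Fin.ext_iff, hii', hjj']
  have hcard :
      (Finset.Icc 1 (4 * p)).card ≤ (Finset.univ : Finset (Fin 2 × Fin (2 * p))).card := by
    simp only [Nat.card_Icc, Finset.card_univ, Fintype.card_prod, Fintype.card_fin]; omega
  refine ⟨hmaps, hinj, ?_⟩
  simpa only [Finset.coe_univ, Finset.coe_Icc] using Finset.surjOn_of_injOn_of_card_le L
    (s := Finset.univ) (by simpa only [Finset.coe_univ, Finset.coe_Icc] using hmaps)
    (by simpa only [Finset.coe_univ] using hinj) hcard

lemma ladderLabel_coprime_succ {i : ℕ} (hi : i < 2) :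
    Nat.Coprime (ladderLabel p i j) (ladderLabel p i (j + 1)) := by
  interval_cases i
  · rcases lt_trichotomy (j + 1) p with h | h | h
    · rw [ladderLabel_zero_of_lt (by omega), ladderLabel_zero_of_lt h]
      simp
    · rw [ladderLabel_zero_of_lt (by omega), ladderLabel_zero_of_le h.ge, h]
      simp
    · rw [ladderLabel_zero_of_le (by omega), ladderLabel_zero_of_le h.le]
      simp [← add_assoc]
  · simp [ladderLabel_one, ← add_assoc]

lemma ladderLabel_dvd_of_not_coprime (hp : p.Prime)
    (h : ¬ Nat.Coprime (ladderLabel p 0 j) (ladderLabel p 1 j)) : p ∣ j + 1 := by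
  rw [ladderLabel_one] at h
  rcases lt_or_ge j p with hjp | hjp
  · rwa [ladderLabel_zero_of_lt hjp, Nat.coprime_add_self_right, Nat.coprime_comm,
      hp.coprime_iff_not_dvd, not_not] at h
  · rwa [ladderLabel_zero_of_le hjp, two_mul, add_assoc, Nat.coprime_add_self_left,
      Nat.coprime_self_add_right, hp.coprime_iff_not_dvd, not_not] at h

lemma ladderLabel_pair_of_not_coprime (hp : p.Prime) (hj : j < 2 * p)
    (h : ¬ Nat.Coprime (ladderLabel p 0 j) (ladderLabel p 1 j)) :
    ({ladderLabel p 0 j, ladderLabel p 1 j} : Set ℕ) = {p, 2 * p} ∨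
      ({ladderLabel p 0 j, ladderLabel p 1 j} : Set ℕ) = {3 * p, 4 * p} := by
  rcases eq_or_eq_two_mul_of_dvd (ladderLabel_dvd_of_not_coprime hp h) j.succ_pos hj with
    hp1 | hp2
  · left
    rw [ladderLabel_zero_of_lt (by omega), ladderLabel_one, hp1, two_mul]
  · right
    rw [ladderLabel_zero_of_le (by omega), ladderLabel_one, hp2, Set.pair_comm]
    ring_nf

end ladderLabel

theorem ladder_standard_labeling_bijOn_and_noncoprime_pairs_general
    (p : ℕ) (hp : p.Prime)
    (f : Fin 2 × Fin (2 * p) → ℕ)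
    (hf : ∀ u : Fin 2 × Fin (2 * p), f u =
      if (u.2 : ℕ) + 1 ≤ p then (u.1 : ℕ) * p + ((u.2 : ℕ) + 1)
      else (2 - (u.1 : ℕ)) * p + ((u.2 : ℕ) + 1)) :
    Set.BijOn f Set.univ (Set.Icc 1 (4 * p)) ∧
    ∀ u v, (Ladder (2 * p)).Adj u v →
      (¬ Nat.Coprime (f u) (f v) ↔
        ({f u, f v} : Set ℕ) = {p, 2 * p} ∨
        ({f u, f v} : Set ℕ) = {3 * p, 4 * p}) := by
  obtain rfl : f = fun u ↦ ladderLabel p u.1 u.2 := funext hf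
  beta_reduce
  refine ⟨ladderLabel_bijOn p, fun u v huv ↦ ⟨?_, not_coprime_of_pair_eq hp.one_lt⟩⟩
  refine Ladder.adj_induction ?_ ?_ ?_ huv
  · intro u v h
    simpa only [Nat.coprime_comm, Set.pair_comm] using h
  · intro i j j' hjj' hnc
    rw [← hjj'] at hnc
    exact absurd (ladderLabel_coprime_succ i.isLt) hnc
  · exact fun j ↦ ladderLabel_pair_of_not_coprime hp j.isLt

/-- For a prime `p ≥ 7`, the labeling `f(i,j) = (i-1)p + j` for `1 ≤ j ≤ p` and
`f(i,j) = (3-i)p + j` for `p + 1 ≤ j ≤ 2p` (here written with `0`-indexed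
vertices `(i', j') ∈ Fin 2 × Fin (2p)`, corresponding to `i = i' + 1`,
`j = j' + 1`) is a bijection onto `{1, …, 4p}`, and the only pairs of adjacent
vertices with non-coprime labels are the pair labeled `{p, 2p}` and the pair
labeled `{3p, 4p}`. -/
theorem ladder_standard_labeling_bijOn_and_noncoprime_pairs
    (p : ℕ) (hp : p.Prime) (hp7 : 7 ≤ p)
    (f : Fin 2 × Fin (2 * p) → ℕ)
    (hf : ∀ u : Fin 2 × Fin (2 * p), f u =
      if (u.2 : ℕ) + 1 ≤ p then (u.1 : ℕ) * p + ((u.2 : ℕ) + 1)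
      else (2 - (u.1 : ℕ)) * p + ((u.2 : ℕ) + 1)) :
    Set.BijOn f Set.univ (Set.Icc 1 (4 * p)) ∧
    ∀ u v, (Ladder (2 * p)).Adj u v →
      (¬ Nat.Coprime (f u) (f v) ↔
        ({f u, f v} : Set ℕ) = {p, 2 * p} ∨
        ({f u, f v} : Set ℕ) = {3 * p, 4 * p}) :=
  ladder_standard_labeling_bijOn_and_noncoprime_pairs_general p hp f hf
end
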